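/- arXiv:1202.4658 — 2 statements merged into one kernel-verified Lean document; each statement's English description precedes it below -/
import Mathlib

section
/- In misère Red-Blue Hackenbush, if the number of grounded blue edges equals the number of grounded red edges, then the first player to move wins (the position is in outcome class N). -/
open scoped Classical

/-- Edge colours for Hackenbush. -/
inductive HColor : Type
  | blue | red | green
  deriving DecidableEq

/-- A Hackenbush position: a finite coloured graph with ground vertices. -/
structure HPos (V : Type) [Fintype V] [DecidableEq V] : Type where
  edges : Finset (Sym2 V)
  color : Sym2 V → HColor
  ground : Finset V

variable {V : Type} [Fintype V] [DecidableEq V]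

/-- The edges of `E` still connected to the ground `g`. -/
noncomputable def alive (E : Finset (Sym2 V)) (g : Finset V) : Finset (Sym2 V) :=
  E.filter fun e => ∃ v ∈ g, ∃ w ∈ e, (SimpleGraph.fromEdgeSet (E : Set (Sym2 V))).Reachable v w

/-- Cut the edge `e`: remove it, and delete all edges disconnected from the ground. -/
noncomputable def HPos.cut (p : HPos V) (e : Sym2 V) : HPos V :=
  ⟨alive (p.edges.erase e) p.ground, p.color, p.ground⟩

/-- Left removes blue (or green) edges. -/
def leftMove (p q : HPos V) : Prop :=
  ∃ e ∈ p.edges, (p.color e = HColor.blue ∨ p.color e = HColor.green) ∧ q = p.cut e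

/-- Right removes red (or green) edges. -/
def rightMove (p q : HPos V) : Prop :=
  ∃ e ∈ p.edges, (p.color e = HColor.red ∨ p.color e = HColor.green) ∧ q = p.cut e

/-- Moves indexed by player: `true` = Left, `false` = Right. -/
def hackMoves : Bool → HPos V → HPos V → Prop
  | true => leftMove
  | false => rightMove

/-- Number of grounded edges of colour `c`. -/
noncomputable def groundedCount (p : HPos V) (c : HColor) : ℕ :=
  (p.edges.filter fun e => p.color e = c ∧ ∃ v ∈ p.ground, v ∈ e).card

/-- `B`: number of grounded blue edges. -/
noncomputable def blueCount (p : HPos V) : ℕ := groundedCount p HColor.blue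
/-- `R`: number of grounded red edges. -/
noncomputable def redCount (p : HPos V) : ℕ := groundedCount p HColor.red

/-- A Red-Blue position: no green edges. -/
def NoGreen (p : HPos V) : Prop := ∀ e ∈ p.edges, p.color e ≠ HColor.green

/-- Every edge of the position is connected to the ground. -/
def AllAlive (p : HPos V) : Prop := alive p.edges p.ground = p.edges

section Games
variable {Pos : Type} (moves : Bool → Pos → Pos → Prop)

/-- `MisWins moves pl t p`: player `pl` wins the misère-play game from position `p`
with player `t` to move (a player unable to move wins). -/
inductive MisWins : Bool → Bool → Pos → Prop
  | terminal {t : Bool} {p : Pos} : (∀ q, ¬ moves t p q) → MisWins t t p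
  | move {pl : Bool} {p q : Pos} : moves pl p q → MisWins pl (!pl) q → MisWins pl pl p
  | opp {pl t : Bool} {p : Pos} : pl ≠ t → (∃ q, moves t p q) →
      (∀ q, moves t p q → MisWins pl (!t) q) → MisWins pl t p

/-- `NorWins moves pl t p`: player `pl` wins the normal-play game from position `p`
with player `t` to move (a player unable to move loses). -/
inductive NorWins : Bool → Bool → Pos → Prop
  | move {pl : Bool} {p q : Pos} : moves pl p q → NorWins pl (!pl) q → NorWins pl pl p
  | opp {pl t : Bool} {p : Pos} : pl ≠ t →
      (∀ q, moves t p q → NorWins pl (!t) q) → NorWins pl t p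

/-- Adjoin a single "green edge": from any position either player may instead end
the game entirely; the terminal position `none` has no moves. -/
def addGreen : Bool → Option Pos → Option Pos → Prop :=
  fun t op oq =>
    match op with
    | none => False
    | some p => (∃ q, moves t p q ∧ oq = some q) ∨ oq = none

end Games

/-- Outcome class `L`: Left wins moving first or second (misère play). -/
def outL (p : HPos V) : Prop := MisWins hackMoves true true p ∧ MisWins hackMoves true false p
/-- Outcome class `R`: Right wins moving first or second (misère play). -/
def outR (p : HPos V) : Prop := MisWins hackMoves false true p ∧ MisWins hackMoves false false p
/-- Outcome class `N`: the first player wins (misère play). -/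
def outN (p : HPos V) : Prop := MisWins hackMoves true true p ∧ MisWins hackMoves false false p
/-- Outcome class `P`: the second player wins (misère play). -/
def outP (p : HPos V) : Prop := MisWins hackMoves true false p ∧ MisWins hackMoves false true p

/-! ### Auxiliary lemmas -/

/-- The colour owned by each player. -/
def pcol : Bool → HColor
  | true => HColor.blue
  | false => HColor.red

lemma pcol_ne_green (t : Bool) : pcol t ≠ HColor.green := by cases t <;> simp [pcol]

lemma pcol_ne_not (t : Bool) : pcol t ≠ pcol (!t) := by cases t <;> simp [pcol]

lemma alive_subset (E : Finset (Sym2 V)) (g : Finset V) : alive E g ⊆ E :=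
  Finset.filter_subset _ _

lemma cut_edges_subset (p : HPos V) (e : Sym2 V) : (p.cut e).edges ⊆ p.edges.erase e :=
  alive_subset _ _

lemma cut_card_lt {p : HPos V} {e : Sym2 V} (he : e ∈ p.edges) :
    (p.cut e).edges.card < p.edges.card :=
  lt_of_le_of_lt (Finset.card_le_card (cut_edges_subset p e)) (Finset.card_erase_lt_of_mem he)

lemma grounded_mem_alive {E : Finset (Sym2 V)} {g : Finset V} {x : Sym2 V} (hx : x ∈ E)
    (hg : ∃ v ∈ g, v ∈ x) : x ∈ alive E g := by
  obtain ⟨v, hv, hvx⟩ := hg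
  exact Finset.mem_filter.2 ⟨hx, v, hv, v, hvx, SimpleGraph.Reachable.refl v⟩

/-- `alive` is idempotent. -/
lemma alive_idem (E : Finset (Sym2 V)) (g : Finset V) : alive (alive E g) g = alive E g := by
  apply Finset.Subset.antisymm (alive_subset _ _)
  intro x hx
  obtain ⟨hxE, v, hv, w, hwx, hreach⟩ := Finset.mem_filter.1 hx
  obtain ⟨W⟩ := hreach
  refine Finset.mem_filter.2 ⟨hx, v, hv, w, hwx, ?_⟩
  have hedges : ∀ f ∈ W.edges,
      f ∈ (SimpleGraph.fromEdgeSet ((alive E g : Finset (Sym2 V)) : Set (Sym2 V))).edgeSet := by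
    intro f hf
    have hfE : f ∈ (SimpleGraph.fromEdgeSet (E : Set (Sym2 V))).edgeSet :=
      W.edges_subset_edgeSet hf
    rw [SimpleGraph.edgeSet_fromEdgeSet] at hfE ⊢
    refine ⟨?_, hfE.2⟩
    induction f using Sym2.ind with
    | _ a b =>
      have ha : a ∈ W.support := SimpleGraph.Walk.fst_mem_support_of_mem_edges W hf
      have hr : (SimpleGraph.fromEdgeSet (E : Set (Sym2 V))).Reachable v a := ⟨W.takeUntil a ha⟩
      have hfE' : s(a, b) ∈ E := Finset.mem_coe.1 hfE.1
      exact Finset.mem_coe.2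
        (Finset.mem_filter.2 ⟨hfE', v, hv, a, Sym2.mem_mk_left a b, hr⟩)
  exact ⟨W.transfer _ hedges⟩

lemma cut_noGreen {p : HPos V} (h : NoGreen p) (e : Sym2 V) : NoGreen (p.cut e) :=
  fun x hx => h x (Finset.mem_of_mem_erase (cut_edges_subset p e hx))

lemma cut_allAlive (p : HPos V) (e : Sym2 V) : AllAlive (p.cut e) :=
  alive_idem _ _

/-- In an all-alive nonempty position there is a grounded edge. -/
lemma exists_grounded {p : HPos V} (hal : AllAlive p) (hne : p.edges.Nonempty) :
    ∃ e ∈ p.edges, ∃ v ∈ p.ground, v ∈ e := by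
  obtain ⟨x, hx⟩ := hne
  have hx' : x ∈ alive p.edges p.ground := by rw [hal]; exact hx
  obtain ⟨hxE, v, hv, w, hwx, hreach⟩ := Finset.mem_filter.1 hx'
  obtain ⟨W⟩ := hreach
  cases W with
  | nil => exact ⟨x, hxE, v, hv, hwx⟩
  | @cons _ b _ hadj W' =>
      rw [SimpleGraph.fromEdgeSet_adj] at hadj
      exact ⟨s(v, b), Finset.mem_coe.1 hadj.1, v, hv, Sym2.mem_mk_left v b⟩

lemma cut_filter (p : HPos V) (e : Sym2 V) (c : HColor) :
    ((p.cut e).edges.filter fun x => (p.cut e).color x = c ∧ ∃ v ∈ (p.cut e).ground, v ∈ x)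
      = (p.edges.filter fun x => p.color x = c ∧ ∃ v ∈ p.ground, v ∈ x).erase e := by
  ext x
  rw [HPos.cut]
  simp only [Finset.mem_filter, Finset.mem_erase]
  constructor
  · rintro ⟨hx, hc, hg⟩
    have hx' := alive_subset _ _ hx
    exact ⟨Finset.ne_of_mem_erase hx', ⟨Finset.mem_of_mem_erase hx', hc, hg⟩⟩
  · rintro ⟨hne, hx, hc, hg⟩
    exact ⟨grounded_mem_alive (Finset.mem_erase.2 ⟨hne, hx⟩) hg, hc, hg⟩

lemma groundedCount_cut_le (p : HPos V) (e : Sym2 V) (c : HColor) :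
    groundedCount (p.cut e) c ≤ groundedCount p c := by
  rw [groundedCount, cut_filter]
  exact le_trans (Finset.card_le_card (Finset.erase_subset _ _)) le_rfl

lemma groundedCount_cut_pred_le (p : HPos V) (e : Sym2 V) (c : HColor) :
    groundedCount p c - 1 ≤ groundedCount (p.cut e) c := by
  simp only [groundedCount]
  rw [cut_filter]
  exact Finset.pred_card_le_card_erase

lemma groundedCount_cut_ne {p : HPos V} {e : Sym2 V} {c : HColor} (hc : p.color e ≠ c) :
    groundedCount (p.cut e) c = groundedCount p c := by
  rw [groundedCount, cut_filter, Finset.erase_eq_of_notMem, groundedCount]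
  simp only [Finset.mem_filter, not_and]
  exact fun _ h _ => hc h

lemma groundedCount_cut_grounded {p : HPos V} {e : Sym2 V} {c : HColor} (he : e ∈ p.edges)
    (hc : p.color e = c) (hg : ∃ v ∈ p.ground, v ∈ e) :
    groundedCount (p.cut e) c = groundedCount p c - 1 := by
  rw [groundedCount, cut_filter, Finset.card_erase_of_mem, groundedCount]
  exact Finset.mem_filter.2 ⟨he, hc, hg⟩

/-- Characterization of moves for red-blue positions. -/
lemma hackMoves_iff {p q : HPos V} (hng : NoGreen p) (t : Bool) :
    hackMoves t p q ↔ ∃ e ∈ p.edges, p.color e = pcol t ∧ q = p.cut e := by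
  cases t <;>
  · simp only [hackMoves, leftMove, rightMove, pcol]
    constructor
    · rintro ⟨e, he, hc | hc, hq⟩
      · exact ⟨e, he, hc, hq⟩
      · exact absurd hc (hng e he)
    · rintro ⟨e, he, hc, hq⟩
      exact ⟨e, he, Or.inl hc, hq⟩

lemma groundedCount_pos {p : HPos V} {c : HColor} (h : 0 < groundedCount p c) :
    ∃ e ∈ p.edges, p.color e = c ∧ ∃ v ∈ p.ground, v ∈ e := by
  obtain ⟨e, he⟩ := Finset.card_pos.1 h
  obtain ⟨he, hc, hg⟩ := Finset.mem_filter.1 he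
  exact ⟨e, he, hc, hg⟩

/-- The main induction: with `t`'s colour count at most the other's, `t` wins moving
first; with it strictly less, `t` wins moving second. -/
lemma misere_main : ∀ n : ℕ, ∀ p : HPos V, p.edges.card ≤ n → NoGreen p → AllAlive p →
    ∀ t : Bool,
    (groundedCount p (pcol t) ≤ groundedCount p (pcol (!t)) → MisWins hackMoves t t p) ∧
    (groundedCount p (pcol t) < groundedCount p (pcol (!t)) → MisWins hackMoves t (!t) p) := by
  intro n
  induction n with
  | zero =>
      intro p hcard hng hal t
      have hempty : p.edges = ∅ := Finset.card_eq_zero.1 (Nat.le_zero.1 hcard)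
      constructor
      · intro _
        refine MisWins.terminal fun q hq => ?_
        obtain ⟨e, he, _, _⟩ := (hackMoves_iff hng t).1 hq
        simp [hempty] at he
      · intro hlt
        exfalso
        have : groundedCount p (pcol (!t)) = 0 := by
          rw [groundedCount]
          simp [hempty]
        omega
  | succ n ih =>
      intro p hcard hng hal t
      have key : ∀ e ∈ p.edges, ∀ s : Bool,
          groundedCount (p.cut e) (pcol s) ≤ groundedCount (p.cut e) (pcol (!s)) →
          MisWins hackMoves s s (p.cut e) := fun e he s h =>
        (ih (p.cut e) (by have := cut_card_lt he; omega) (cut_noGreen hng e)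
          (cut_allAlive p e) s).1 h
      have key2 : ∀ e ∈ p.edges, ∀ s : Bool,
          groundedCount (p.cut e) (pcol s) < groundedCount (p.cut e) (pcol (!s)) →
          MisWins hackMoves s (!s) (p.cut e) := fun e he s h =>
        (ih (p.cut e) (by have := cut_card_lt he; omega) (cut_noGreen hng e)
          (cut_allAlive p e) s).2 h
      constructor
      · -- moving first with count ≤ opposite count
        intro hle
        by_cases hex : ∃ e ∈ p.edges, p.color e = pcol t
        · obtain ⟨e, he, hc⟩ := hex
          -- edges nonempty so some grounded edge exists; hence the opposite count is positive
          have hopp : 0 < groundedCount p (pcol (!t)) := by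
            obtain ⟨e₀, he₀, hg₀⟩ := exists_grounded hal ⟨e, he⟩
            have hc₀ := hng e₀ he₀
            have : 0 < groundedCount p (p.color e₀) :=
              Finset.card_pos.2 ⟨e₀, Finset.mem_filter.2 ⟨he₀, rfl, hg₀⟩⟩
            have hcases : p.color e₀ = pcol t ∨ p.color e₀ = pcol (!t) := by
              cases t <;> rcases h₀ : p.color e₀ <;> simp_all [pcol]
            rcases hcases with h₀ | h₀ <;> rw [h₀] at this <;> omega
          rcases lt_or_eq_of_le hle with hlt | heq
          · -- strict: cut any own-coloured edge
            refine MisWins.move ((hackMoves_iff hng t).2 ⟨e, he, hc, rfl⟩) ?_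
            apply key2 e he
            have h1 : groundedCount (p.cut e) (pcol t) ≤ groundedCount p (pcol t) :=
              groundedCount_cut_le p e _
            have h2 : groundedCount (p.cut e) (pcol (!t)) = groundedCount p (pcol (!t)) :=
              groundedCount_cut_ne (by rw [hc]; exact pcol_ne_not t)
            omega
          · -- equal (and positive): cut a grounded own-coloured edge
            have hmy : 0 < groundedCount p (pcol t) := heq ▸ hopp
            obtain ⟨e₁, he₁, hc₁, hg₁⟩ := groundedCount_pos hmy
            refine MisWins.move ((hackMoves_iff hng t).2 ⟨e₁, he₁, hc₁, rfl⟩) ?_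
            apply key2 e₁ he₁
            have h1 : groundedCount (p.cut e₁) (pcol t) = groundedCount p (pcol t) - 1 :=
              groundedCount_cut_grounded he₁ hc₁ hg₁
            have h2 : groundedCount (p.cut e₁) (pcol (!t)) = groundedCount p (pcol (!t)) :=
              groundedCount_cut_ne (by rw [hc₁]; exact pcol_ne_not t)
            omega
        · -- no own-coloured edge: terminal, t wins in misère play
          refine MisWins.terminal fun q hq => ?_
          obtain ⟨e, he, hc, _⟩ := (hackMoves_iff hng t).1 hq
          exact hex ⟨e, he, hc⟩
      · -- moving second with count < opposite count
        intro hlt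
        have hopp : 0 < groundedCount p (pcol (!t)) := by omega
        obtain ⟨e₂, he₂, hc₂, _⟩ := groundedCount_pos hopp
        refine MisWins.opp (by cases t <;> simp) ⟨p.cut e₂, (hackMoves_iff hng (!t)).2
          ⟨e₂, he₂, hc₂, rfl⟩⟩ fun q hq => ?_
        obtain ⟨e, he, hc, hq⟩ := (hackMoves_iff hng (!t)).1 hq
        subst hq
        rw [Bool.not_not]
        apply key e he
        have h1 : groundedCount (p.cut e) (pcol t) = groundedCount p (pcol t) :=
          groundedCount_cut_ne (by rw [hc]; exact (pcol_ne_not (!t)).symm ∘ Eq.symm ∘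
            (by rw [Bool.not_not]; exact ·))
        have h2 : groundedCount p (pcol (!t)) - 1 ≤ groundedCount (p.cut e) (pcol (!t)) :=
          groundedCount_cut_pred_le p e _
        omega

/-- In misère Red-Blue Hackenbush, if B = R then the position is in
outcome class N (the first player to move wins). -/
theorem misere_rb_first_player_wins (p : HPos V) (hrb : NoGreen p) (hal : AllAlive p)
    (h : blueCount p = redCount p) : outN p := by
  have hmain := misere_main p.edges.card p le_rfl hrb hal
  have hb : groundedCount p (pcol true) = blueCount p := rfl
  have hr : groundedCount p (pcol false) = redCount p := rfl
  constructor
  · exact (hmain true).1 (by simp only [Bool.not_true]; rw [hb, hr, h])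
  · exact (hmain false).1 (by simp only [Bool.not_false]; rw [hb, hr, h])
end

section
/- Let G be a combinatorial game in which both players always have at least one move available until the game ends, and let G_m be the game whose positions are those of G together with a terminal 'green edge' move available to both players: from any position of G a player may instead end the game entirely (after which the opponent cannot move). If a player wins G under normal play (last player to move wins), then the same player wins G_m under misère play (last player to move loses). -/
open scoped Classical

variable {V : Type} [Fintype V] [DecidableEq V]

/-- If in `G` both players always have a move until the game ends, and
`G_m` adjoins a terminal "green edge" move available to both players, then any player
winning `G` under normal play also wins `G_m` under misère play. -/
theorem normal_win_to_misere_win_addGreen {Pos : Type} (moves : Bool → Pos → Pos → Prop)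
    (hbal : ∀ p : Pos, (∃ q, moves true p q) ↔ (∃ q, moves false p q))
    (pl t : Bool) (p : Pos) (h : NorWins moves pl t p) :
    MisWins (addGreen moves) pl t (some p) := by
  induction h with
  | @move p q hm _ ih =>
      exact MisWins.move (Or.inl ⟨q, hm, rfl⟩) ih
  | @opp t p hne _ ih =>
      refine MisWins.opp hne ⟨none, Or.inr rfl⟩ ?_
      rintro oq (⟨q, hq, rfl⟩ | rfl)
      · exact ih q hq
      · have : pl = !t := by
          cases pl <;> cases t <;> simp_all
        rw [this]
        exact MisWins.terminal (fun q hq => hq)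
end
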